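/- In the poset S_n of spherical subsets of E_{9+n}, the full subposet E_n = {J ∈ S_n : J ∩ I_0 is spherical and i ∈ J for all i < 0} is cofinal: every J ∈ S_n is contained in some element of E_n. -/

import Mathlib

/-
If `J` is spherical it cannot contain all of `I₀ = {0, …, 8}`: the affine `E₈` Cartan matrix has
the null vector of marks `(1, 2, 3, 4, 5, 6, 4, 2, 3)`. So some `k ∈ I₀` is missing from `J`, and we
take `J' = {-n, …, 8} \ {k}`. This `J'` is spherical because its Cartan matrix is the Gram matrix of
linearly independent vectors of `ℓ²(ℤ)`: `e i - e (i + 1)` for the chain nodes `i ≠ 8`, and for the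
node `8` an explicit vector orthogonal to every chain root except `e 5 - e 6`. A Gram matrix of
independent vectors is positive definite, so all its principal minors are positive.
-/

/-- Adjacency in the generalized Dynkin diagrams `E_{9+n}`: nodes are integers
`-n, …, -1, 0, 1, …, 7` forming a chain, with the extra node `8` attached to node `5`. -/
def eAdj (i j : ℤ) : Prop :=
  (i ≠ 8 ∧ j ≠ 8 ∧ (i - j = 1 ∨ j - i = 1)) ∨ (i = 5 ∧ j = 8) ∨ (i = 8 ∧ j = 5)

instance (i j : ℤ) : Decidable (eAdj i j) := by unfold eAdj; infer_instance

/-- The generalized Cartan matrix entries for the `E`-family diagrams. -/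
def eCartan (i j : ℤ) : ℤ := if i = j then 2 else if eAdj i j then -1 else 0

/-- The principal submatrix of the `E`-family Cartan matrix with indices in `J`. -/
def eMat (J : Finset ℤ) : Matrix J J ℤ := fun i j => eCartan i.1 j.1

/-- A finite set of nodes is spherical if all principal minors of the corresponding
principal submatrix of the `E`-family Cartan matrix are positive (finite type). -/
def eSph (J : Finset ℤ) : Prop := ∀ K : Finset ℤ, K ⊆ J → 0 < (eMat K).det

open Finset
open scoped InnerProductSpace

theorem eCartan_comm (i j : ℤ) : eCartan i j = eCartan j i := by
  unfold eCartan eAdj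
  split_ifs <;> omega

theorem eCartan_eight_of_neg {j : ℤ} (hj : j < 0) : eCartan 8 j = 0 := by
  unfold eCartan eAdj
  split_ifs <;> omega

theorem eCartan_of_ne_eight {i j : ℤ} (hi : i ≠ 8) (hj : j ≠ 8) :
    eCartan i j = if i = j then 2 else if i + 1 = j ∨ i = j + 1 then -1 else 0 := by
  unfold eCartan
  split_ifs <;> simp only [eAdj] at * <;> omega

theorem eSph.mono {J K : Finset ℤ} (hJ : eSph J) (hK : K ⊆ J) : eSph K :=
  fun L hL => hJ L (hL.trans hK)

def affineE8Marks (i : ℤ) : ℤ :=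
  if i ≤ 5 then i + 1 else if i = 6 then 4 else if i = 7 then 2 else 3

theorem sum_eCartan_mul_affineE8Marks :
    ∀ i ∈ Icc (0 : ℤ) 8, ∑ j ∈ Icc (0 : ℤ) 8, eCartan i j * affineE8Marks j = 0 := by
  decide

theorem det_eMat_Icc_zero_eight : (eMat (Icc 0 8)).det = 0 := by
  rw [← Matrix.exists_mulVec_eq_zero_iff]
  refine ⟨fun j => affineE8Marks j, fun h => ?_, ?_⟩
  · simpa [affineE8Marks] using congrFun h ⟨0, by decide⟩
  · funext i
    refine Eq.trans ?_ (sum_eCartan_mul_affineE8Marks i i.2)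
    exact (sum_coe_sort (Icc 0 8) fun j => eCartan i j * affineE8Marks j).symm

theorem not_eSph_of_Icc_subset {J : Finset ℤ} (hJ : Icc 0 8 ⊆ J) : ¬ eSph J :=
  fun h => (h _ hJ).ne' det_eMat_Icc_zero_eight

section Gram

variable {E : Type*} [NormedAddCommGroup E] [InnerProductSpace ℝ E]

theorem eSph_of_linearIndependent_of_inner_eq (J : Finset ℤ) (v : ℤ → E)
    (hv : LinearIndependent ℝ fun i : J => v i)
    (hinner : ∀ i ∈ J, ∀ j ∈ J, ⟪v i, v j⟫_ℝ = eCartan i j) : eSph J := by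
  intro K hK
  have hgram : Matrix.gram ℝ (fun i : K => v i) = (eMat K).map ((↑) : ℤ → ℝ) := by
    ext i j
    exact hinner i (hK i.2) j (hK j.2)
  have hindep : LinearIndependent ℝ fun i : K => v i :=
    hv.comp (fun i : K => (⟨i.1, hK i.2⟩ : J)) fun _ _ h =>
      Subtype.ext (congrArg (fun x : J => (x : ℤ)) h)
  have hpos := (Matrix.posDef_gram_of_linearIndependent hindep).det_pos
  rw [hgram, ← Int.cast_det] at hpos
  exact_mod_cast hpos

theorem linearIndependent_of_inner_triangular {ι : Type*} [LinearOrder ι] (v p : ι → E)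
    (hdiag : ∀ i, ⟪p i, v i⟫_ℝ ≠ 0) (hlt : ∀ i j, j < i → ⟪p i, v j⟫_ℝ = 0) :
    LinearIndependent ℝ v := by
  classical
  rw [linearIndependent_iff']
  intro s
  induction s using Finset.induction_on_max with
  | empty => simp
  | insert a s hlt_a ih =>
    intro g hg
    have ha : a ∉ s := fun h => lt_irrefl a (hlt_a a h)
    have hga : g a = 0 := by
      have h := congrArg (⟪p a, ·⟫_ℝ) hg
      simp only [sum_insert ha, inner_add_right, inner_sum, inner_smul_right, inner_zero_right] at h
      rw [sum_eq_zero fun j hj => by rw [hlt a j (hlt_a j hj), mul_zero], add_zero] at h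
      exact (mul_eq_zero.mp h).resolve_right (hdiag a)
    rw [sum_insert ha, hga, zero_smul, zero_add] at hg
    intro i hi
    rcases mem_insert.mp hi with rfl | hi
    · exact hga
    · exact ih g hg i hi

end Gram

/- Twice the coordinates of the vector realizing node `8` once node `k` is deleted. For `k ≤ 4`
it is the `E₈`-type vector `½(-1, …, -1, 1, 1, 1)` on `k+1, …, 8`, padded by `-½` on `9, …, 8+k`
to keep norm `2`; for `k = 5, 6, 7` a sum of two basis vectors suffices. -/
def branchRoot (k s : ℤ) : ℤ :=
  if k ≤ 4 then
    if k < s ∧ s ≤ 5 then -1 else if 6 ≤ s ∧ s ≤ 8 then 1 else if 9 ≤ s ∧ s ≤ 8 + k then -1 else 0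
  else if k = 5 then if s = 9 ∨ s = 10 then 2 else 0
  else if k = 6 then if s = 6 ∨ s = 9 then 2 else 0
  else if s = 6 ∨ s = 7 then 2 else 0

theorem branchRoot_of_nonpos {k s : ℤ} (hk : 0 ≤ k) (hs : s ≤ 0) : branchRoot k s = 0 := by
  unfold branchRoot
  split_ifs <;> omega

theorem branchRoot_sub_succ :
    ∀ k ∈ Icc (0 : ℤ) 7, ∀ j ∈ Icc (0 : ℤ) 7, j ≠ k →
      branchRoot k j - branchRoot k (j + 1) = 2 * eCartan 8 j := by
  decide

theorem sum_branchRoot_sq : ∀ k ∈ Icc (0 : ℤ) 7, ∑ s ∈ Icc 1 12, branchRoot k s ^ 2 = 8 := by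
  decide

theorem sum_branchRoot_ne_zero : ∀ k ∈ Icc (0 : ℤ) 7, ∑ s ∈ Icc 1 12, branchRoot k s ≠ 0 := by
  decide

section Realization

variable {E : Type*} [NormedAddCommGroup E] [InnerProductSpace ℝ E] {e : ℤ → E}

theorem inner_sub_succ_eq_eCartan (he : Orthonormal ℝ e) {i j : ℤ} (hi : i ≠ 8) (hj : j ≠ 8) :
    ⟪e i - e (i + 1), e j - e (j + 1)⟫_ℝ = eCartan i j := by
  simp only [inner_sub_left, inner_sub_right, orthonormal_iff_ite.mp he,
    eCartan_of_ne_eight hi hj]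
  push_cast
  split_ifs <;> first | omega | norm_num

theorem inner_sum_basis (he : Orthonormal ℝ e) {S : Finset ℤ} {t : ℤ} (ht : t ∈ S) :
    ⟪∑ s ∈ S, e s, e t⟫_ℝ = 1 := by
  simp [sum_inner, orthonormal_iff_ite.mp he, ht]

variable (e) in
noncomputable def branchVec (k : ℤ) : E := ∑ s ∈ Icc 1 12, ((branchRoot k s : ℝ) / 2) • e s

theorem inner_basis_branchVec (he : Orthonormal ℝ e) {k t : ℤ} (hk : 0 ≤ k) (ht : t ≤ 12) :
    ⟪e t, branchVec e k⟫_ℝ = branchRoot k t / 2 := by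
  by_cases ht1 : 1 ≤ t
  · exact he.inner_right_sum _ (mem_Icc.mpr ⟨ht1, ht⟩)
  · rw [branchRoot_of_nonpos hk (by omega)]
    simp [branchVec, inner_sum, inner_smul_right, orthonormal_iff_ite.mp he]
    omega

theorem inner_branchVec_sub_succ (he : Orthonormal ℝ e) {k j : ℤ} (hk : k ∈ Icc 0 7) (hj : j ≤ 7)
    (hjk : j ≠ k) : ⟪branchVec e k, e j - e (j + 1)⟫_ℝ = eCartan 8 j := by
  have hk0 : 0 ≤ k := (mem_Icc.mp hk).1
  rw [inner_sub_right, real_inner_comm, real_inner_comm (e (j + 1)),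
    inner_basis_branchVec he hk0 (by omega), inner_basis_branchVec he hk0 (by omega)]
  by_cases hj0 : 0 ≤ j
  · have h := branchRoot_sub_succ k hk j (mem_Icc.mpr ⟨hj0, hj⟩) hjk
    rw [← sub_div, ← Int.cast_sub, h]
    push_cast
    ring
  · rw [branchRoot_of_nonpos hk0 (by omega), branchRoot_of_nonpos hk0 (by omega),
      eCartan_eight_of_neg (by omega)]
    simp

theorem inner_branchVec_self (he : Orthonormal ℝ e) {k : ℤ} (hk : k ∈ Icc 0 7) :
    ⟪branchVec e k, branchVec e k⟫_ℝ = eCartan 8 8 := by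
  have h : ∑ s ∈ Icc 1 12, (branchRoot k s : ℝ) ^ 2 = 8 := by
    exact_mod_cast sum_branchRoot_sq k hk
  rw [branchVec, he.inner_sum]
  simp only [conj_trivial]
  calc ∑ s ∈ Icc 1 12, (branchRoot k s : ℝ) / 2 * (branchRoot k s / 2)
      = (∑ s ∈ Icc 1 12, (branchRoot k s : ℝ) ^ 2) / 4 := by
        rw [sum_div]; exact sum_congr rfl fun s _ => by ring
    _ = eCartan 8 8 := by rw [h]; norm_num [eCartan]

theorem inner_sum_Icc_branchVec_ne_zero (he : Orthonormal ℝ e) {k : ℤ} (hk : k ∈ Icc 0 7)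
    (n : ℕ) : ⟪∑ s ∈ Icc (-(n : ℤ)) 12, e s, branchVec e k⟫_ℝ ≠ 0 := by
  have h : ∑ s ∈ Icc 1 12, (branchRoot k s : ℝ) ≠ 0 := by
    exact_mod_cast sum_branchRoot_ne_zero k hk
  rw [branchVec, inner_sum]
  calc ∑ s ∈ Icc 1 12, ⟪∑ t ∈ Icc (-(n : ℤ)) 12, e t, ((branchRoot k s : ℝ) / 2) • e s⟫_ℝ
      = (∑ s ∈ Icc 1 12, (branchRoot k s : ℝ)) / 2 := by
        rw [sum_div]
        refine sum_congr rfl fun s hs => ?_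
        rw [inner_smul_right, inner_sum_basis he (Icc_subset_Icc (by omega) le_rfl hs), mul_one]
    _ ≠ 0 := div_ne_zero h two_ne_zero

variable (e) in
noncomputable def eRoot (k i : ℤ) : E := if i = 8 then branchVec e k else e i - e (i + 1)

theorem inner_eRoot (he : Orthonormal ℝ e) {n : ℕ} {k i j : ℤ} (hk : k ∈ Icc 0 8)
    (hi : i ∈ (Icc (-(n : ℤ)) 8).erase k) (hj : j ∈ (Icc (-(n : ℤ)) 8).erase k) :
    ⟪eRoot e k i, eRoot e k j⟫_ℝ = eCartan i j := by
  simp only [mem_erase, mem_Icc] at hi hj hk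
  have hk7 (h : i = 8 ∨ j = 8) : k ∈ Icc 0 7 := mem_Icc.mpr (by omega)
  unfold eRoot
  split_ifs with hi8 hj8 hj8
  · subst hi8 hj8; exact inner_branchVec_self he (hk7 (.inl rfl))
  · subst hi8; exact inner_branchVec_sub_succ he (hk7 (.inl rfl)) (by omega) hj.1
  · subst hj8
    rw [real_inner_comm, eCartan_comm]
    exact inner_branchVec_sub_succ he (hk7 (.inr rfl)) (by omega) hi.1
  · exact inner_sub_succ_eq_eCartan he hi8 hj8

theorem linearIndependent_eRoot (he : Orthonormal ℝ e) {n : ℕ} {k : ℤ} (hk : k ∈ Icc 0 8) :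
    LinearIndependent ℝ fun i : (Icc (-(n : ℤ)) 8).erase k => eRoot e k i := by
  have hmem {i : ℤ} (hi : i ∈ (Icc (-(n : ℤ)) 8).erase k) : i ≠ k ∧ -(n : ℤ) ≤ i ∧ i ≤ 8 := by
    simpa only [mem_erase, mem_Icc] using hi
  -- The sum of all basis vectors kills every chain root, so it is a pivot for node `8`.
  refine linearIndependent_of_inner_triangular _
    (fun i => if i.1 = 8 then ∑ s ∈ Icc (-(n : ℤ)) 12, e s else e (i + 1)) (fun i => ?_)
    (fun i j hji => ?_)
  · obtain ⟨hik, -, hi8⟩ := hmem i.2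
    simp only [mem_Icc] at hk
    unfold eRoot
    split_ifs with h
    · exact inner_sum_Icc_branchVec_ne_zero he (mem_Icc.mpr (by omega)) n
    · rw [inner_sub_right, orthonormal_iff_ite.mp he, orthonormal_iff_ite.mp he, if_neg (by omega),
        if_pos rfl]
      norm_num
  · have hji' : j.1 < i.1 := hji
    obtain ⟨-, hjn, -⟩ := hmem j.2
    have hj8 : j.1 ≠ 8 := by have := (hmem i.2).2.2; omega
    simp only [eRoot, if_neg hj8, inner_sub_right]
    split_ifs with h
    · rw [inner_sum_basis he (mem_Icc.mpr ⟨hjn, by omega⟩),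
        inner_sum_basis he (mem_Icc.mpr ⟨by omega, by omega⟩), sub_self]
    · simp only [orthonormal_iff_ite.mp he]
      split_ifs <;> first | omega | simp

end Realization

theorem eSph_Icc_erase (n : ℕ) {k : ℤ} (hk : k ∈ Icc 0 8) : eSph ((Icc (-(n : ℤ)) 8).erase k) :=
  let b : HilbertBasis ℤ ℝ (lp (fun _ : ℤ => ℝ) 2) := default
  eSph_of_linearIndependent_of_inner_eq _ (eRoot b k) (linearIndependent_eRoot b.orthonormal hk)
    fun _ hi _ hj => inner_eRoot b.orthonormal hk hi hj

/-- In the poset `S_n` of spherical subsets of `E_{9+n}`, the subposet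
`E_n = {J ∈ S_n : J ∩ I₀ spherical and i ∈ J for all i < 0}` is cofinal: every
spherical subset is contained in some element of `E_n`. -/
theorem stmt8 (n : ℕ) (J : Finset ℤ) (hJ : J ⊆ Finset.Icc (-(n : ℤ)) 8)
    (hs : eSph J) :
    ∃ J' : Finset ℤ, J ⊆ J' ∧ J' ⊆ Finset.Icc (-(n : ℤ)) 8 ∧ eSph J' ∧
      eSph (J' ∩ Finset.Icc (0 : ℤ) 8) ∧ Finset.Icc (-(n : ℤ)) (-1) ⊆ J' := by
  obtain ⟨k, hk, hkJ⟩ : ∃ k ∈ Icc (0 : ℤ) 8, k ∉ J := by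
    by_contra! h
    exact not_eSph_of_Icc_subset h hs
  have hsph := eSph_Icc_erase n hk
  refine ⟨(Icc (-(n : ℤ)) 8).erase k,
    fun x hx => mem_erase.mpr ⟨ne_of_mem_of_not_mem hx hkJ, hJ hx⟩, erase_subset _ _, hsph,
    hsph.mono inter_subset_left, fun x hx => ?_⟩
  rw [mem_Icc] at hx hk
  exact mem_erase.mpr ⟨by omega, mem_Icc.mpr (by omega)⟩
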